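/- For real numbers q₁ ≠ q₂ and a fixed real parameter w, define the M₂(ℝ)⊗M₂(ℝ)-valued functions a(q₁,q₂) = (1/(2(q₁−q₂)))·(−w·e₁₁⊗e₂₂ + e₁₂⊗e₂₁ − e₂₁⊗e₁₂ + w·e₂₂⊗e₁₁) and c(q₁,q₂) = (1/(2(q₁−q₂)))·(−w·e₁₁⊗e₁₁ + e₁₂⊗e₁₂ − e₂₁⊗e₂₁ + w·e₂₂⊗e₂₂). For 1 ≤ j < k ≤ 3 let r_{jk} (r = a or c) denote the operator on (ℝ²)^{⊗3} acting as r(q₁,q₂) on tensor factors j and k and as the identity on the remaining factor. For k ∈ {1,2,3} and any differentiable matrix-valued function r of (q₁,q₂), define h_k∂r = (e₁₁ acting on factor k)·∂r/∂q₁ + (e₂₂ acting on factor k)·∂r/∂q₂. Then on the domain q₁ ≠ q₂: [a₁₂, c₁₃ + c₂₃] + [c₁₃, c₂₃] + (1/2)·( −h₃∂a₁₂ + h₁∂c₂₃ − h₂∂c₁₃ ) = 0. -/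

import Mathlib

open Matrix Kronecker

noncomputable section

/-- `2×2` real matrices. -/
abbrev M2 : Type := Matrix (Fin 2) (Fin 2) ℝ

/-- `M₂(ℝ) ⊗ M₂(ℝ)` realized via the Kronecker product. -/
abbrev M4 : Type := Matrix (Fin 2 × Fin 2) (Fin 2 × Fin 2) ℝ

/-- Operators on `(ℝ²)^{⊗3}`, realized as matrices indexed by triples. -/
abbrev M8 : Type := Matrix (Fin 2 × Fin 2 × Fin 2) (Fin 2 × Fin 2 × Fin 2) ℝ

/-- The `2×2` elementary matrix `e_{ij}` (indices `0,1` for `1,2`). -/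
def E (i j : Fin 2) : M2 := Matrix.single i j 1

/-- The dynamical `a`-matrix of the second Poisson structure of the `N = 2`
rational Calogero–Moser model, with gauge parameter `w`:
`a(q₁,q₂) = (1/(2(q₁−q₂)))·(−w e₁₁⊗e₂₂ + e₁₂⊗e₂₁ − e₂₁⊗e₁₂ + w e₂₂⊗e₁₁)`. -/
def aMat (w q₁ q₂ : ℝ) : M4 :=
  (1 / (2 * (q₁ - q₂))) •
    (-(w • (E 0 0 ⊗ₖ E 1 1)) + E 0 1 ⊗ₖ E 1 0 - E 1 0 ⊗ₖ E 0 1 + w • (E 1 1 ⊗ₖ E 0 0))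

/-- Place a matrix of `M₂(ℝ)⊗M₂(ℝ)` on tensor factors 1 and 2 of `(ℝ²)^{⊗3}`,
acting as identity on factor 3. -/
def place12 (r : M4) : M8 :=
  Matrix.of fun i j => r (i.1, i.2.1) (j.1, j.2.1) * (if i.2.2 = j.2.2 then 1 else 0)

/-- Place a matrix of `M₂(ℝ)⊗M₂(ℝ)` on tensor factors 1 and 3 of `(ℝ²)^{⊗3}`,
acting as identity on factor 2. -/
def place13 (r : M4) : M8 :=
  Matrix.of fun i j => r (i.1, i.2.2) (j.1, j.2.2) * (if i.2.1 = j.2.1 then 1 else 0)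

/-- Place a matrix of `M₂(ℝ)⊗M₂(ℝ)` on tensor factors 2 and 3 of `(ℝ²)^{⊗3}`,
acting as identity on factor 1. -/
def place23 (r : M4) : M8 :=
  Matrix.of fun i j => r (i.2.1, i.2.2) (j.2.1, j.2.2) * (if i.1 = j.1 then 1 else 0)

/-- A `2×2` matrix acting on tensor factor 1 of `(ℝ²)^{⊗3}`. -/
def fac1 (m : M2) : M8 :=
  Matrix.of fun i j => m i.1 j.1 * (if i.2 = j.2 then 1 else 0)

/-- A `2×2` matrix acting on tensor factor 2 of `(ℝ²)^{⊗3}`. -/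
def fac2 (m : M2) : M8 :=
  Matrix.of fun i j => m i.2.1 j.2.1 * (if (i.1, i.2.2) = (j.1, j.2.2) then 1 else 0)

/-- A `2×2` matrix acting on tensor factor 3 of `(ℝ²)^{⊗3}`. -/
def fac3 (m : M2) : M8 :=
  Matrix.of fun i j => m i.2.2 j.2.2 * (if (i.1, i.2.1) = (j.1, j.2.1) then 1 else 0)

/-- Entrywise partial derivative in the first variable `q₁`. -/
def pd1 (f : ℝ → ℝ → M8) (q₁ q₂ : ℝ) : M8 :=
  Matrix.of fun i j => deriv (fun t => f t q₂ i j) q₁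

/-- Entrywise partial derivative in the second variable `q₂`. -/
def pd2 (f : ℝ → ℝ → M8) (q₁ q₂ : ℝ) : M8 :=
  Matrix.of fun i j => deriv (fun t => f q₁ t i j) q₂

/-- `h₁∂r = (e₁₁ on factor 1)·∂r/∂q₁ + (e₂₂ on factor 1)·∂r/∂q₂`. -/
def hd1 (f : ℝ → ℝ → M8) (q₁ q₂ : ℝ) : M8 :=
  fac1 (E 0 0) * pd1 f q₁ q₂ + fac1 (E 1 1) * pd2 f q₁ q₂

/-- `h₂∂r = (e₁₁ on factor 2)·∂r/∂q₁ + (e₂₂ on factor 2)·∂r/∂q₂`. -/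
def hd2 (f : ℝ → ℝ → M8) (q₁ q₂ : ℝ) : M8 :=
  fac2 (E 0 0) * pd1 f q₁ q₂ + fac2 (E 1 1) * pd2 f q₁ q₂

/-- `h₃∂r = (e₁₁ on factor 3)·∂r/∂q₁ + (e₂₂ on factor 3)·∂r/∂q₂`. -/
def hd3 (f : ℝ → ℝ → M8) (q₁ q₂ : ℝ) : M8 :=
  fac3 (E 0 0) * pd1 f q₁ q₂ + fac3 (E 1 1) * pd2 f q₁ q₂

/-- `a₁₂` as a function of the dynamical variables. -/
def a12 (w : ℝ) : ℝ → ℝ → M8 := fun q₁ q₂ => place12 (aMat w q₁ q₂)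

/-- `a₁₃` as a function of the dynamical variables. -/
def a13 (w : ℝ) : ℝ → ℝ → M8 := fun q₁ q₂ => place13 (aMat w q₁ q₂)

/-- `a₂₃` as a function of the dynamical variables. -/
def a23 (w : ℝ) : ℝ → ℝ → M8 := fun q₁ q₂ => place23 (aMat w q₁ q₂)

/-- `a₃₂ = −a₂₃`. -/
def a32 (w : ℝ) : ℝ → ℝ → M8 := fun q₁ q₂ => -a23 w q₁ q₂

/-- `a₃₁ = −a₁₃`. -/
def a31 (w : ℝ) : ℝ → ℝ → M8 := fun q₁ q₂ => -a13 w q₁ q₂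


/-- The dynamical `c`-matrix of the second Poisson structure of the `N = 2`
rational Calogero–Moser model, with gauge parameter `w`:
`c(q₁,q₂) = (1/(2(q₁−q₂)))·(−w e₁₁⊗e₁₁ + e₁₂⊗e₁₂ − e₂₁⊗e₂₁ + w e₂₂⊗e₂₂)`. -/
def cMat (w q₁ q₂ : ℝ) : M4 :=
  (1 / (2 * (q₁ - q₂))) •
    (-(w • (E 0 0 ⊗ₖ E 0 0)) + E 0 1 ⊗ₖ E 0 1 - E 1 0 ⊗ₖ E 1 0 + w • (E 1 1 ⊗ₖ E 1 1))

/-- `c₁₃` as a function of the dynamical variables. -/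
def c13 (w : ℝ) : ℝ → ℝ → M8 := fun q₁ q₂ => place13 (cMat w q₁ q₂)

/-- `c₂₃` as a function of the dynamical variables. -/
def c23 (w : ℝ) : ℝ → ℝ → M8 := fun q₁ q₂ => place23 (cMat w q₁ q₂)

/-!
Both `a` and `c` are `f = 1 / (2 (q₁ - q₂))` times a constant matrix, and `∂₁f = -2f²`,
`∂₂f = 2f²`. Hence `hₖ∂(f • M) = -2f² (e₁₁ - e₂₂)ₖ M`, and the whole left-hand side is `f²` times
a constant identity in `M₈`, polynomial in `w`, which is checked entry by entry.
-/

def aNum (w : ℝ) : M4 :=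
  -(w • (E 0 0 ⊗ₖ E 1 1)) + E 0 1 ⊗ₖ E 1 0 - E 1 0 ⊗ₖ E 0 1 + w • (E 1 1 ⊗ₖ E 0 0)

def cNum (w : ℝ) : M4 :=
  -(w • (E 0 0 ⊗ₖ E 0 0)) + E 0 1 ⊗ₖ E 0 1 - E 1 0 ⊗ₖ E 1 0 + w • (E 1 1 ⊗ₖ E 1 1)

theorem place12_smul (c : ℝ) (r : M4) : place12 (c • r) = c • place12 r := by
  ext; simp [place12]

theorem place13_smul (c : ℝ) (r : M4) : place13 (c • r) = c • place13 r := by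
  ext; simp [place13]

theorem place23_smul (c : ℝ) (r : M4) : place23 (c • r) = c • place23 r := by
  ext; simp [place23]

theorem a12_eq (w : ℝ) : a12 w = fun q₁ q₂ => (1 / (2 * (q₁ - q₂))) • place12 (aNum w) := by
  funext q₁ q₂; exact place12_smul _ _

theorem c13_eq (w : ℝ) : c13 w = fun q₁ q₂ => (1 / (2 * (q₁ - q₂))) • place13 (cNum w) := by
  funext q₁ q₂; exact place13_smul _ _

theorem c23_eq (w : ℝ) : c23 w = fun q₁ q₂ => (1 / (2 * (q₁ - q₂))) • place23 (cNum w) := by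
  funext q₁ q₂; exact place23_smul _ _

section ScalarMultiple

variable (g : ℝ → ℝ → ℝ) (M : M8) (q₁ q₂ : ℝ)

theorem pd1_smul_const : pd1 (fun t s => g t s • M) q₁ q₂ = deriv (g · q₂) q₁ • M := by
  ext; simp [pd1, deriv_mul_const_field]

theorem pd2_smul_const : pd2 (fun t s => g t s • M) q₁ q₂ = deriv (g q₁ ·) q₂ • M := by
  ext; simp [pd2, deriv_mul_const_field]

end ScalarMultiple

theorem deriv_one_div_two_mul_sub_left {q₁ q₂ : ℝ} (hq : q₁ ≠ q₂) :
    deriv (fun t => 1 / (2 * (t - q₂))) q₁ = -2 * (1 / (2 * (q₁ - q₂))) ^ 2 := by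
  have hs : q₁ - q₂ ≠ 0 := sub_ne_zero.mpr hq
  have := (((hasDerivAt_id' q₁).sub_const q₂).const_mul 2).fun_inv (by simpa using hs)
  simp only [one_div]; rw [this.deriv]; field_simp

theorem deriv_one_div_two_mul_sub_right {q₁ q₂ : ℝ} (hq : q₁ ≠ q₂) :
    deriv (fun s => 1 / (2 * (q₁ - s))) q₂ = 2 * (1 / (2 * (q₁ - q₂))) ^ 2 := by
  have hs : q₁ - q₂ ≠ 0 := sub_ne_zero.mpr hq
  have := (((hasDerivAt_id' q₂).const_sub q₁).const_mul 2).fun_inv (by simpa using hs)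
  simp only [one_div]; rw [this.deriv]; field_simp

theorem mul_pd1_add_mul_pd2_pole_smul (P Q M : M8) {q₁ q₂ : ℝ} (hq : q₁ ≠ q₂) :
    P * pd1 (fun t s => (1 / (2 * (t - s))) • M) q₁ q₂
      + Q * pd2 (fun t s => (1 / (2 * (t - s))) • M) q₁ q₂
      = (-2 * (1 / (2 * (q₁ - q₂))) ^ 2) • ((P - Q) * M) := by
  rw [pd1_smul_const, pd2_smul_const, deriv_one_div_two_mul_sub_left hq,
    deriv_one_div_two_mul_sub_right hq]
  simp only [mul_smul_comm, sub_mul, smul_sub]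
  module

set_option maxHeartbeats 400000 in
theorem mixed_cdybe_numerators (w : ℝ) :
    place12 (aNum w) * (place13 (cNum w) + place23 (cNum w))
      - (place13 (cNum w) + place23 (cNum w)) * place12 (aNum w)
      + (place13 (cNum w) * place23 (cNum w) - place23 (cNum w) * place13 (cNum w))
      + ((fac3 (E 0 0) - fac3 (E 1 1)) * place12 (aNum w)
        - (fac1 (E 0 0) - fac1 (E 1 1)) * place23 (cNum w)
        + (fac2 (E 0 0) - fac2 (E 1 1)) * place13 (cNum w)) = 0 := by
  ext ⟨a, b, c⟩ ⟨d, e, f⟩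
  simp only [Matrix.mul_apply, Fintype.sum_prod_type, Fin.sum_univ_two, place12, place13,
    place23, fac1, fac2, fac3, aNum, cNum, E, Matrix.of_apply, Matrix.add_apply,
    Matrix.sub_apply, Matrix.neg_apply, Matrix.smul_apply, Matrix.kroneckerMap_apply,
    Matrix.single_apply, smul_eq_mul, Prod.mk.injEq, Matrix.zero_apply]
  fin_cases a <;> fin_cases b <;> fin_cases c <;> fin_cases d <;> fin_cases e <;> fin_cases f <;>
    simp

/-- the mixed classical dynamical Yang–Baxter equation
`[a₁₂, c₁₃ + c₂₃] + [c₁₃, c₂₃] + ½(−h₃∂a₁₂ + h₁∂c₂₃ − h₂∂c₁₃) = 0`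
holds for the explicit `a`- and `c`-matrices on the domain `q₁ ≠ q₂`. -/
theorem stmt10 (w q₁ q₂ : ℝ) (hq : q₁ ≠ q₂) :
    (a12 w q₁ q₂ * (c13 w q₁ q₂ + c23 w q₁ q₂)
      - (c13 w q₁ q₂ + c23 w q₁ q₂) * a12 w q₁ q₂)
    + (c13 w q₁ q₂ * c23 w q₁ q₂ - c23 w q₁ q₂ * c13 w q₁ q₂)
    + (1 / 2 : ℝ) • (-hd3 (a12 w) q₁ q₂ + hd1 (c23 w) q₁ q₂ - hd2 (c13 w) q₁ q₂)
    = 0 := by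
  simp only [hd1, hd2, hd3, a12_eq, c13_eq, c23_eq, mul_pd1_add_mul_pd2_pole_smul _ _ _ hq]
  set f := 1 / (2 * (q₁ - q₂))
  have key := congrArg ((f * f) • ·) (mixed_cdybe_numerators w)
  rw [smul_zero] at key
  rw [← key]
  simp only [smul_mul_smul_comm, mul_add, add_mul, smul_add]
  module

end
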